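/- Let {pα : α ∈ Λ} be a separating family of C*-seminorms on a *-algebra A (i.e. pα(a) = 0 for all α implies a = 0). Suppose * and # are two involutions on A such that every pα satisfies the C*-condition and *-invariance for both involutions, i.e. pα(a*a) = pα(a)² = pα(a#a) and pα(a*) = pα(a) = pα(a#) for all a and α. Then a* = a# for all a ∈ A. -/

import Mathlib

/-!
The C*-identity forces every C*-seminorm to be invariant under both involutions, so for each
seminorm `p` both extend to the completion of `(A, p)`, a Banach algebra in which they are
still C*-involutions; since the seminorms separate points, it suffices to show that two
C*-involutions `σ` and `star` of a C*-algebra agree.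

If `σ h = h`, then `u r = exp (r • I • h)` is `σ`-unitary, hence of norm one, so
`‖star (u r) * u r‖ = ‖u r‖ ^ 2 = 1` for all real `r`. The curve `r ↦ star (u r) * u r`
starts at `1`, stays in the unit ball and has the self-adjoint derivative
`m = star (I • h) + I • h` at `0`; staying in the unit ball puts the spectrum of `m` on the
imaginary axis, self-adjointness puts it on the real axis, and a self-adjoint element with
spectrum `{0}` vanishes, so `m = 0`, i.e. `star h = h`. Applying this to `x + σ x` and
`I • (x - σ x)` gives `σ x = star x`.
-/

open NormedSpace UniformSpace

section Spectrum

variable {A : Type*} [NormedRing A] [NormedAlgebra ℂ A] [CompleteSpace A] [NormOneClass A]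
  {w : ℝ → A} {m : A}

theorem spectrum.re_nonpos_of_hasDerivAt (hw : HasDerivAt w m 0) (hw0 : w 0 = 1)
    (hle : ∀ r, ‖w r‖ ≤ 1) {z : ℂ} (hz : z ∈ spectrum ℂ m) : z.re ≤ 0 := by
  refine le_of_forall_pos_le_add fun ε hε => ?_
  obtain ⟨r, hr, hr0⟩ :=
    (((hw.isLittleO.bound hε).filter_mono (nhdsWithin_le_nhds (s := Set.Ioi 0))).and
      self_mem_nhdsWithin).exists
  simp only [hw0, sub_zero, Real.norm_eq_abs, abs_of_pos (show (0 : ℝ) < r from hr0)] at hr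
  have hmem : 1 + (r : ℂ) * z ∈ spectrum ℂ (algebraMap ℂ A 1 + (r : ℂ) • m) := by
    rw [add_comm (1 : ℂ), spectrum.add_mem_add_iff]
    have hr' : (r : ℂ) ≠ 0 := by exact_mod_cast hr0.ne'
    have h := (spectrum.smul_mem_smul_iff (r := Units.mk0 (r : ℂ) hr')).mpr hz
    simpa [Units.smul_def] using h
  have hnorm : ‖algebraMap ℂ A 1 + (r : ℂ) • m‖ ≤ 1 + ε * r := by
    rw [map_one, Complex.coe_smul]
    calc ‖1 + r • m‖ ≤ ‖w r‖ + ‖w r - 1 - r • m‖ := by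
          rw [← norm_neg (w r - 1 - r • m)]
          convert norm_le_insert' (1 + r • m) (w r) using 3
          abel
      _ ≤ 1 + ε * r := add_le_add (hle r) hr
  have h := (Complex.re_le_norm _).trans ((spectrum.norm_le_norm_of_mem hmem).trans hnorm)
  rw [Complex.add_re, Complex.one_re, Complex.re_ofReal_mul] at h
  nlinarith

theorem spectrum.re_eq_zero_of_hasDerivAt (hw : HasDerivAt w m 0) (hw0 : w 0 = 1)
    (hle : ∀ r, ‖w r‖ ≤ 1) {z : ℂ} (hz : z ∈ spectrum ℂ m) : z.re = 0 := by
  have hw' : HasDerivAt (fun r => w (-r)) (-m) 0 := by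
    have h : HasDerivAt w m (-0) := by rwa [neg_zero]
    simpa [Function.comp_def] using h.scomp 0 (hasDerivAt_neg' 0)
  have hneg := spectrum.re_nonpos_of_hasDerivAt hw' (by rwa [neg_zero]) (fun r => hle (-r))
    (by rw [← spectrum.neg_eq]; exact Set.neg_mem_neg.mpr hz)
  linarith [spectrum.re_nonpos_of_hasDerivAt hw hw0 hle hz, Complex.neg_re z]

end Spectrum

theorem IsSelfAdjoint.eq_zero_of_hasDerivAt {A : Type*} [CStarAlgebra A] {w : ℝ → A} {m : A}
    (hm : IsSelfAdjoint m) (hw : HasDerivAt w m 0) (hw0 : w 0 = 1) (hle : ∀ r, ‖w r‖ ≤ 1) :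
    m = 0 := by
  nontriviality A
  refine CFC.eq_zero_of_spectrum_subset_zero (R := ℂ) m fun z hz => ?_
  exact Complex.ext (spectrum.re_eq_zero_of_hasDerivAt hw hw0 hle hz)
    (hm.im_eq_zero_of_mem_spectrum hz)

noncomputable instance UniformSpace.Completion.instNormedAlgebraOfSeminormedRing
    {𝕜 A : Type*} [NormedField 𝕜] [SeminormedRing A] [NormedAlgebra 𝕜 A] :
    NormedAlgebra 𝕜 (Completion A) where
  norm_smul_le := norm_smul_le

structure IsInvolution {A : Type*} [Ring A] [Algebra ℂ A] (σ : A → A) : Prop where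
  map_add : ∀ x y, σ (x + y) = σ x + σ y
  map_smul : ∀ (c : ℂ) x, σ (c • x) = starRingEnd ℂ c • σ x
  map_mul : ∀ x y, σ (x * y) = σ y * σ x
  involutive : ∀ x, σ (σ x) = x

namespace IsInvolution

variable {A : Type*} [Ring A] [Algebra ℂ A] {σ : A → A}

def toAddMonoidHom (hσ : IsInvolution σ) : A →+ A := AddMonoidHom.mk' σ hσ.map_add

theorem map_zero (hσ : IsInvolution σ) : σ 0 = 0 := _root_.map_zero hσ.toAddMonoidHom

theorem map_sub (hσ : IsInvolution σ) (x y : A) : σ (x - y) = σ x - σ y :=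
  _root_.map_sub hσ.toAddMonoidHom x y

theorem map_one (hσ : IsInvolution σ) : σ 1 = 1 := by
  simpa [hσ.involutive] using (hσ.map_mul 1 (σ 1)).symm

theorem map_real_smul (hσ : IsInvolution σ) (r : ℝ) (x : A) : σ (r • x) = r • σ x := by
  simpa [Complex.coe_smul] using hσ.map_smul r x

@[simps]
def toRingHomMop (hσ : IsInvolution σ) : A →+* Aᵐᵒᵖ where
  toFun x := MulOpposite.op (σ x)
  map_one' := by simp [hσ.map_one]
  map_mul' x y := by simp [hσ.map_mul]
  map_zero' := by simp [hσ.map_zero]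
  map_add' x y := by simp [hσ.map_add]

end IsInvolution

structure IsCStarInvolution {A : Type*} [SeminormedRing A] [NormedAlgebra ℂ A] (σ : A → A) :
    Prop extends IsInvolution σ where
  norm_map_mul_self : ∀ x, ‖σ x * x‖ = ‖x‖ ^ 2

namespace IsCStarInvolution

section Seminormed

variable {A : Type*} [SeminormedRing A] [NormedAlgebra ℂ A] {σ : A → A}

theorem norm_le_norm_map (hσ : IsCStarInvolution σ) (x : A) : ‖x‖ ≤ ‖σ x‖ := by
  have h := (hσ.norm_map_mul_self x).symm.trans_le (norm_mul_le (σ x) x)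
  rcases (norm_nonneg x).eq_or_lt with hx | hx
  · rw [← hx]
    exact norm_nonneg _
  · nlinarith

theorem norm_map (hσ : IsCStarInvolution σ) (x : A) : ‖σ x‖ = ‖x‖ :=
  le_antisymm (by simpa [hσ.involutive] using hσ.norm_le_norm_map (σ x)) (hσ.norm_le_norm_map x)

theorem lipschitzWith (hσ : IsCStarInvolution σ) : LipschitzWith 1 σ :=
  LipschitzWith.of_dist_le_mul fun x y => by
    rw [dist_eq_norm, dist_eq_norm, ← hσ.map_sub, hσ.norm_map, NNReal.coe_one, one_mul]

theorem norm_eq_one_of_map_mul_self_eq_one [NormOneClass A] (hσ : IsCStarInvolution σ) {u : A}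
    (hu : σ u * u = 1) : ‖u‖ = 1 := by
  have h := hσ.norm_map_mul_self u
  rw [hu, norm_one] at h
  exact (pow_eq_one_iff_of_nonneg (norm_nonneg u) two_ne_zero).mp h.symm

theorem completion_map (hσ : IsCStarInvolution σ) : IsCStarInvolution (Completion.map σ) := by
  have hcont : Continuous (Completion.map σ) := Completion.continuous_map
  have hcoe (x : A) : Completion.map σ x = σ x :=
    Completion.map_coe hσ.lipschitzWith.uniformContinuous x
  refine ⟨⟨fun x y => ?_, fun c x => ?_, fun x y => ?_, fun x => ?_⟩, fun x => ?_⟩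
  · induction x, y using Completion.induction_on₂ with
    | hp =>
      exact isClosed_eq (hcont.comp continuous_add)
        ((hcont.comp continuous_fst).add (hcont.comp continuous_snd))
    | ih x y => simp only [← Completion.coe_add, hcoe, hσ.map_add]
  · induction x using Completion.induction_on with
    | hp =>
      exact isClosed_eq (hcont.comp (continuous_const_smul c))
        ((continuous_const_smul _).comp hcont)
    | ih x => simp only [← Completion.coe_smul, hcoe, hσ.map_smul]
  · induction x, y using Completion.induction_on₂ with
    | hp =>
      exact isClosed_eq (hcont.comp continuous_mul)
        ((hcont.comp continuous_snd).mul (hcont.comp continuous_fst))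
    | ih x y => simp only [← Completion.coe_mul, hcoe, hσ.map_mul]
  · induction x using Completion.induction_on with
    | hp => exact isClosed_eq (hcont.comp hcont) continuous_id
    | ih x => simp only [hcoe, hσ.involutive]
  · induction x using Completion.induction_on with
    | hp => exact isClosed_eq (hcont.mul continuous_id).norm (continuous_norm.pow 2)
    | ih x => simp only [hcoe, ← Completion.coe_mul, Completion.norm_coe, hσ.norm_map_mul_self]

end Seminormed

section Banach

variable {A : Type*} [NormedRing A] [NormedAlgebra ℂ A] [CompleteSpace A] {σ : A → A}

theorem map_exp (hσ : IsCStarInvolution σ) (x : A) : σ (exp x) = exp (σ x) := by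
  let _ : NormedAlgebra ℚ A := .restrictScalars ℚ ℂ A
  simpa using congrArg MulOpposite.unop <| NormedSpace.map_exp hσ.toRingHomMop
    (MulOpposite.continuous_op.comp hσ.lipschitzWith.continuous) x

theorem norm_exp_eq_one [NormOneClass A] (hσ : IsCStarInvolution σ) {c : A} (hc : σ c = -c) :
    ‖exp c‖ = 1 := by
  let _ : NormedAlgebra ℚ A := .restrictScalars ℚ ℂ A
  refine hσ.norm_eq_one_of_map_mul_self_eq_one ?_
  rw [hσ.map_exp, hc, ← exp_add_of_commute (Commute.refl c).neg_left, neg_add_cancel, exp_zero]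

abbrev toCStarAlgebra (hσ : IsCStarInvolution σ) : CStarAlgebra A where
  star := σ
  star_involutive := hσ.involutive
  star_mul := hσ.map_mul
  star_add := hσ.map_add
  norm_mul_self_le x := by rw [← sq, ← hσ.norm_map_mul_self]; rfl
  star_smul := hσ.map_smul

end Banach

section CStarAlgebra

variable {A : Type*} [CStarAlgebra A] {σ : A → A}

theorem star_eq_of_map_eq (hσ : IsCStarInvolution σ) {h : A} (hh : σ h = h) : star h = h := by
  nontriviality A
  set c := Complex.I • h
  have hc (r : ℝ) : σ (r • c) = -(r • c) := by
    rw [hσ.map_real_smul, hσ.map_smul, hh, Complex.conj_I, neg_smul, smul_neg]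
  have hu : HasDerivAt (fun r : ℝ => exp (r • c)) c 0 := by
    simpa using hasDerivAt_exp_smul_const (𝕂 := ℝ) c 0
  have hw : HasDerivAt (fun r : ℝ => star (exp (r • c)) * exp (r • c)) (star c + c) 0 := by
    have h := hu.star.mul hu
    simp only [zero_smul, exp_zero, star_one, mul_one, one_mul] at h
    exact h
  have hsum : star c + c = 0 :=
    (IsSelfAdjoint.star_add_self c).eq_zero_of_hasDerivAt hw (by simp) fun r => by
      rw [CStarRing.norm_star_mul_self, hσ.norm_exp_eq_one (hc r), one_mul]
  have hI : Complex.I • (h - star h) = 0 := by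
    rw [← hsum, smul_sub]
    simp only [c, star_smul, Complex.star_def, Complex.conj_I, neg_smul]
    abel
  exact (sub_eq_zero.mp ((smul_eq_zero.mp hI).resolve_left Complex.I_ne_zero)).symm

theorem eq_star (hσ : IsCStarInvolution σ) : σ = star := by
  funext x
  have h₁ := hσ.star_eq_of_map_eq (h := x + σ x) (by rw [hσ.map_add, hσ.involutive, add_comm])
  have h₂ := hσ.star_eq_of_map_eq (h := Complex.I • (x - σ x)) (by
    rw [hσ.map_smul, hσ.map_sub, hσ.involutive, Complex.conj_I, neg_smul, ← smul_neg, neg_sub])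
  simp only [star_add, star_smul, star_sub, Complex.star_def, Complex.conj_I] at h₁ h₂
  linear_combination (norm := match_scalars <;> ring_nf <;> simp [Complex.I_sq])
    (-2⁻¹ : ℂ) • h₁ + (-2⁻¹ * Complex.I : ℂ) • h₂

end CStarAlgebra

theorem eq {A : Type*} [NormedRing A] [NormedAlgebra ℂ A] [CompleteSpace A] {σ τ : A → A}
    (hσ : IsCStarInvolution σ) (hτ : IsCStarInvolution τ) : σ = τ :=
  let _ := hτ.toCStarAlgebra
  hσ.eq_star

theorem norm_sub_eq_zero {A : Type*} [SeminormedRing A] [NormedAlgebra ℂ A] {σ τ : A → A}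
    (hσ : IsCStarInvolution σ) (hτ : IsCStarInvolution τ) (x : A) : ‖σ x - τ x‖ = 0 := by
  have h := congrFun (hσ.completion_map.eq hτ.completion_map) x
  rw [Completion.map_coe hσ.lipschitzWith.uniformContinuous,
    Completion.map_coe hτ.lipschitzWith.uniformContinuous] at h
  rw [← Completion.norm_coe, Completion.coe_sub, h, sub_self, norm_zero]

end IsCStarInvolution

theorem stmt_5_general {A ι : Type*} [Ring A] [Algebra ℂ A]
    (p : ι → Seminorm ℂ A)
    (hsep : ∀ a : A, (∀ i, p i a = 0) → a = 0)
    (hmul : ∀ i, ∀ a b : A, p i (a * b) ≤ p i a * p i b)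
    (s t : A → A)
    (hs_add : ∀ x y, s (x + y) = s x + s y)
    (hs_smul : ∀ (c : ℂ) (x : A), s (c • x) = (starRingEnd ℂ c) • s x)
    (hs_mul : ∀ x y, s (x * y) = s y * s x)
    (hs_inv : ∀ x, s (s x) = x)
    (ht_add : ∀ x y, t (x + y) = t x + t y)
    (ht_smul : ∀ (c : ℂ) (x : A), t (c • x) = (starRingEnd ℂ c) • t x)
    (ht_mul : ∀ x y, t (x * y) = t y * t x)
    (ht_inv : ∀ x, t (t x) = x)
    (hs_cstar : ∀ i, ∀ a : A, p i (s a * a) = p i a ^ 2)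
    (ht_cstar : ∀ i, ∀ a : A, p i (t a * a) = p i a ^ 2) :
    ∀ a : A, s a = t a := by
  refine fun a => sub_eq_zero.mp (hsep _ fun i => ?_)
  let _ : SeminormedRing A := RingSeminorm.toSeminormedRing { p i with mul_le' := hmul i }
  let _ : NormedAlgebra ℂ A := { norm_smul_le c x := (map_smul_eq_mul (p i) c x).le }
  exact IsCStarInvolution.norm_sub_eq_zero ⟨⟨hs_add, hs_smul, hs_mul, hs_inv⟩, hs_cstar i⟩
    ⟨⟨ht_add, ht_smul, ht_mul, ht_inv⟩, ht_cstar i⟩ a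

/-- Main theorem: uniqueness of involution in locally C*-algebras. If a complex
algebra carries a separating family of seminorms which are C*-seminorms (with
*-invariance) for each of two involutions, then the two involutions coincide. -/
theorem stmt_5 {A ι : Type*} [Ring A] [Algebra ℂ A]
    (p : ι → Seminorm ℂ A)
    (hsep : ∀ a : A, (∀ i, p i a = 0) → a = 0)
    (hmul : ∀ i, ∀ a b : A, p i (a * b) ≤ p i a * p i b)
    (s t : A → A)
    (hs_add : ∀ x y, s (x + y) = s x + s y)
    (hs_smul : ∀ (c : ℂ) (x : A), s (c • x) = (starRingEnd ℂ c) • s x)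
    (hs_mul : ∀ x y, s (x * y) = s y * s x)
    (hs_inv : ∀ x, s (s x) = x)
    (ht_add : ∀ x y, t (x + y) = t x + t y)
    (ht_smul : ∀ (c : ℂ) (x : A), t (c • x) = (starRingEnd ℂ c) • t x)
    (ht_mul : ∀ x y, t (x * y) = t y * t x)
    (ht_inv : ∀ x, t (t x) = x)
    (hs_cstar : ∀ i, ∀ a : A, p i (s a * a) = p i a ^ 2)
    (ht_cstar : ∀ i, ∀ a : A, p i (t a * a) = p i a ^ 2)
    (hs_star : ∀ i, ∀ a : A, p i (s a) = p i a)
    (ht_star : ∀ i, ∀ a : A, p i (t a) = p i a) :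
    ∀ a : A, s a = t a :=
  stmt_5_general p hsep hmul s t hs_add hs_smul hs_mul hs_inv ht_add ht_smul ht_mul ht_inv hs_cstar
    ht_cstar
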